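/- For every real number κ ≠ 0, the function u_κ(x) = (2 i κ x e^{−iκx} / (Γ(1 − i/(2κ)) · Γ(1 + i/(2κ)))) · ∫_0^1 e^{2iκxs} · exp((i/(2κ))(log s − log(1−s))) ds satisfies the dimensionless radial Coulomb equation u_κ''(x) + (1/x + κ²) · u_κ(x) = 0 for every real x > 0. -/

import Mathlib

open MeasureTheory Real Complex

/-- The Whittaker radial solution `u_κ(x)`. -/
noncomputable def whittakerU (κ : ℝ) (x : ℝ) : ℂ :=
  (2 * Complex.I * (κ : ℂ) * (x : ℂ) * Complex.exp (-Complex.I * κ * x) /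
      (Complex.Gamma (1 - Complex.I / (2 * κ)) * Complex.Gamma (1 + Complex.I / (2 * κ)))) *
    ∫ s in Set.Ioo (0 : ℝ) 1,
      Complex.exp (2 * Complex.I * κ * x * s) *
        Complex.exp ((Complex.I / (2 * κ)) * ((Real.log s : ℂ) - (Real.log (1 - s) : ℂ)))

/-!
Write `c = 2iκ` and `g(s) = exp((i/(2κ)) (log s - log(1-s))) = s^(a-1) (1-s)^(b-a-1)` with
`a = 1 + i/(2κ)`, `b = 2`, so that `u_κ(x) = C x e^(-iκx) F(x)` with `F(x) = ∫₀¹ e^(cxs) g(s) ds`,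
Euler's integral for Kummer's function. Differentiating under the integral sign,
`x F'' + (b - cx) F' - ac F = -c ∫₀¹ G'(s) ds` for `G(s) = s (1-s) e^(cxs) g(s)`, since
`s (1-s) g' = (a - 1 - (b-2) s) g`; the integral vanishes because `G → 0` at both ends of `(0,1)`.
Finally the substitution `u = x e^(-iκx) F` turns Kummer's equation
`x F'' + (2 - 2iκx) F' + (α - 2iκ) F = 0` into `u'' + (α/x + κ²) u = 0`; here `α = 1`
because `ac = 2iκ - 1` for `κ ≠ 0`.
-/

open Set Filter Topology

noncomputable def laplaceIoo (c : ℂ) (g : ℝ → ℂ) (x : ℝ) : ℂ :=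
  ∫ s in Ioo (0 : ℝ) 1, cexp (c * x * s) * g s

section LaplaceIoo

variable {g : ℝ → ℂ}

theorem integrableOn_Ioo_continuous_mul {φ : ℝ → ℂ} (hφ : Continuous φ)
    (hg : IntegrableOn g (Ioo 0 1)) : IntegrableOn (fun s => φ s * g s) (Ioo 0 1) :=
  IntegrableOn.continuousOn_mul_of_subset hφ.continuousOn hg isCompact_Icc measurableSet_Ioo
    Ioo_subset_Icc_self

theorem integrableOn_Ioo_const_mul_ofReal_mul (c : ℂ) (hg : IntegrableOn g (Ioo 0 1)) :
    IntegrableOn (fun s : ℝ => c * s * g s) (Ioo 0 1) :=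
  integrableOn_Ioo_continuous_mul (by fun_prop) hg

theorem hasDerivAt_laplaceIoo (c : ℂ) (hg : IntegrableOn g (Ioo 0 1)) (x : ℝ) :
    HasDerivAt (laplaceIoo c g) (laplaceIoo c (fun s => c * s * g s) x) x := by
  have hint : ∀ h : ℝ → ℂ, IntegrableOn h (Ioo 0 1) → ∀ y : ℝ,
      IntegrableOn (fun s : ℝ => cexp (c * y * s) * h s) (Ioo 0 1) :=
    fun h hh y => integrableOn_Ioo_continuous_mul (by fun_prop) hh
  have hbound : ∀ s ∈ Ioo (0 : ℝ) 1, ∀ y ∈ Metric.ball x 1,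
      ‖cexp (c * y * s) * (c * s * g s)‖ ≤ ‖c‖ * Real.exp (‖c‖ * (|x| + 1)) * ‖g s‖ := by
    intro s hs y hy
    have hs1 : |s| ≤ 1 := abs_le.2 ⟨by linarith [hs.1], hs.2.le⟩
    have hy1 : |y| ≤ |x| + 1 := by
      rw [Metric.mem_ball, Real.dist_eq] at hy
      linarith [abs_sub_abs_le_abs_sub y x]
    have hexp : ‖cexp (c * y * s)‖ ≤ Real.exp (‖c‖ * (|x| + 1)) := by
      refine (norm_exp_le_exp_norm _).trans (Real.exp_le_exp.2 ?_)
      rw [norm_mul, norm_mul, norm_real, norm_real, Real.norm_eq_abs, Real.norm_eq_abs]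
      calc ‖c‖ * |y| * |s| ≤ ‖c‖ * |y| := mul_le_of_le_one_right (by positivity) hs1
        _ ≤ ‖c‖ * (|x| + 1) := by gcongr
    calc ‖cexp (c * y * s) * (c * s * g s)‖ = ‖cexp (c * y * s)‖ * (‖c‖ * |s| * ‖g s‖) := by
          rw [norm_mul, norm_mul, norm_mul, norm_real, Real.norm_eq_abs]
      _ ≤ Real.exp (‖c‖ * (|x| + 1)) * (‖c‖ * 1 * ‖g s‖) := by gcongr
      _ = ‖c‖ * Real.exp (‖c‖ * (|x| + 1)) * ‖g s‖ := by ring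
  have hderiv : ∀ s y : ℝ, HasDerivAt (fun y : ℝ => cexp (c * y * s) * g s)
      (cexp (c * y * s) * (c * s * g s)) y := by
    intro s y
    refine ((((hasDerivAt_id' y).ofReal_comp.const_mul c).mul_const (s : ℂ)).cexp.mul_const
      (g s)).congr_deriv ?_
    push_cast
    ring
  exact (hasDerivAt_integral_of_dominated_loc_of_deriv_le (Metric.ball_mem_nhds x one_pos)
    (Eventually.of_forall fun y => (hint g hg y).aestronglyMeasurable) (hint g hg x)
    (hint _ (integrableOn_Ioo_const_mul_ofReal_mul c hg) x).aestronglyMeasurable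
    (ae_restrict_of_forall_mem measurableSet_Ioo hbound) (hg.norm.const_mul _)
    (ae_of_all _ fun s y _ => hderiv s y)).2

theorem laplaceIoo_kummer {a b c : ℂ} {g' : ℝ → ℂ} (hg : IntegrableOn g (Ioo 0 1))
    (hg' : ∀ s ∈ Ioo (0 : ℝ) 1, HasDerivAt g (g' s) s)
    (hode : ∀ s ∈ Ioo (0 : ℝ) 1, s * (1 - s) * g' s = (a - 1 - (b - 2) * s) * g s)
    (h0 : Tendsto (fun s : ℝ => s * (1 - s) * g s) (𝓝[>] 0) (𝓝 0))
    (h1 : Tendsto (fun s : ℝ => s * (1 - s) * g s) (𝓝[<] 1) (𝓝 0)) (x : ℝ) :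
    x * laplaceIoo c (fun s => c * s * (c * s * g s)) x
      + (b - c * x) * laplaceIoo c (fun s => c * s * g s) x - a * c * laplaceIoo c g x = 0 := by
  set G : ℝ → ℂ := fun s => cexp (c * x * s) * (s * (1 - s) * g s)
  set G' : ℝ → ℂ := fun s => cexp (c * x * s) * ((a - b * s + c * x * (s * (1 - s))) * g s)
  have hG : ∀ s ∈ Ioo (0 : ℝ) 1, HasDerivAt G (G' s) s := by
    intro s hs
    have hpoly : HasDerivAt (fun s : ℝ => (s : ℂ) * (1 - s)) (1 - 2 * s) s := by
      refine ((hasDerivAt_id' s).ofReal_comp.mul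
        ((hasDerivAt_id' s).ofReal_comp.const_sub 1)).congr_deriv ?_
      push_cast
      ring
    have hexp : HasDerivAt (fun s : ℝ => cexp (c * x * s)) (cexp (c * x * s) * (c * x)) s :=
      ((hasDerivAt_id' s).ofReal_comp.const_mul (c * x)).cexp.congr_deriv (by push_cast; ring)
    refine (hexp.mul (hpoly.mul (hg' s hs))).congr_deriv ?_
    simp only [Pi.mul_apply]
    linear_combination cexp (c * x * s) * hode s hs
  have hG'int : IntegrableOn G' (Ioo 0 1) := by
    simpa only [G', ← mul_assoc] using integrableOn_Ioo_continuous_mul (by fun_prop) hg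
  have hFTC : ∫ s in Ioo (0 : ℝ) 1, G' s = 0 := by
    have hcont : Continuous fun s : ℝ => cexp (c * x * s) := by fun_prop
    have := intervalIntegral.integral_eq_sub_of_hasDerivAt_of_tendsto zero_lt_one hG
      ((intervalIntegrable_iff_integrableOn_Ioo_of_le zero_le_one).2 hG'int)
      (((hcont.tendsto 0).mono_left nhdsWithin_le_nhds).mul h0)
      (((hcont.tendsto 1).mono_left nhdsWithin_le_nhds).mul h1)
    rwa [intervalIntegral.integral_of_le zero_le_one, integral_Ioc_eq_integral_Ioo, mul_zero,
      mul_zero, sub_zero] at this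
  have hf0 :=
    integrableOn_Ioo_continuous_mul (φ := fun s : ℝ => cexp (c * x * s)) (by fun_prop) hg
  have hf1 := integrableOn_Ioo_continuous_mul (φ := fun s : ℝ => cexp (c * x * s)) (by fun_prop)
    (integrableOn_Ioo_const_mul_ofReal_mul c hg)
  have hf2 := integrableOn_Ioo_continuous_mul (φ := fun s : ℝ => cexp (c * x * s)) (by fun_prop)
    (integrableOn_Ioo_const_mul_ofReal_mul c (integrableOn_Ioo_const_mul_ofReal_mul c hg))
  calc _ = ∫ s in Ioo (0 : ℝ) 1, (x * (cexp (c * x * s) * (c * s * (c * s * g s)))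
        + (b - c * x) * (cexp (c * x * s) * (c * s * g s)) - a * c * (cexp (c * x * s) * g s)) := by
        rw [integral_sub, integral_add, integral_const_mul, integral_const_mul, integral_const_mul]
        · rfl
        · exact hf2.const_mul _
        · exact hf1.const_mul _
        · exact (hf2.const_mul _).add (hf1.const_mul _)
        · exact hf0.const_mul _
    _ = ∫ s in Ioo (0 : ℝ) 1, -c * G' s := by congr 1; ext s; simp only [G']; ring
    _ = 0 := by rw [integral_const_mul, hFTC, mul_zero]

end LaplaceIoo

theorem coulomb_of_kummer {κ α F'' : ℂ} {F F' : ℝ → ℂ} {x : ℝ} (hx : x ≠ 0)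
    (hF : ∀ y, HasDerivAt F (F' y) y) (hF' : HasDerivAt F' F'' x)
    (hK : x * F'' + (2 - 2 * I * κ * x) * F' x + (α - 2 * I * κ) * F x = 0) :
    deriv (deriv fun y : ℝ => y * cexp (-I * κ * y) * F y) x
      + (α / x + κ ^ 2) * (x * cexp (-I * κ * x) * F x) = 0 := by
  have hid : ∀ y : ℝ, HasDerivAt (fun y : ℝ => (y : ℂ)) 1 y := fun y => by
    simpa using (hasDerivAt_id' y).ofReal_comp
  have hexp : ∀ y : ℝ,
      HasDerivAt (fun y : ℝ => cexp (-I * κ * y)) (-I * κ * cexp (-I * κ * y)) y :=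
    fun y => ((hid y).const_mul (-I * κ)).cexp.congr_deriv (by ring)
  have hu : deriv (fun y : ℝ => y * cexp (-I * κ * y) * F y)
      = fun y : ℝ => cexp (-I * κ * y) * (F y + y * F' y - I * κ * y * F y) := by
    funext y
    refine ((((hid y).mul (hexp y)).mul (hF y)).congr_deriv ?_).deriv
    simp only [Pi.mul_apply]
    ring
  have hu' : HasDerivAt (fun y : ℝ => cexp (-I * κ * y) * (F y + y * F' y - I * κ * y * F y))
      (cexp (-I * κ * x) *
        (x * F'' + (2 - 2 * I * κ * x) * F' x - (2 * I * κ + κ ^ 2 * x) * F x)) x := by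
    refine ((hexp x).mul (((hF x).add ((hid x).mul hF')).sub
      (((hid x).const_mul (I * κ)).mul (hF x)))).congr_deriv ?_
    simp only [Pi.mul_apply, Pi.add_apply, Pi.sub_apply]
    linear_combination κ ^ 2 * x * F x * cexp (-I * κ * x) * I_sq
  have hxc : (x : ℂ) ≠ 0 := ofReal_ne_zero.2 hx
  have hpot : (α / x + κ ^ 2) * (x * cexp (-I * κ * x) * F x)
      = (α + κ ^ 2 * x) * cexp (-I * κ * x) * F x := by
    field_simp
  rw [hu, hu'.deriv, hpot]
  linear_combination cexp (-I * κ * x) * hK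

noncomputable def whittakerWeight (κ : ℝ) (s : ℝ) : ℂ :=
  cexp (I / (2 * κ) * ((Real.log s : ℂ) - (Real.log (1 - s) : ℂ)))

theorem norm_whittakerWeight (κ s : ℝ) : ‖whittakerWeight κ s‖ = 1 := by
  rw [whittakerWeight, norm_exp]
  simp [div_re, mul_re]

theorem integrableOn_whittakerWeight (κ : ℝ) : IntegrableOn (whittakerWeight κ) (Ioo 0 1) :=
  IntegrableOn.of_bound measure_Ioo_lt_top
    (by unfold whittakerWeight; fun_prop) 1 (ae_of_all _ fun s => (norm_whittakerWeight κ s).le)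

theorem hasDerivAt_whittakerWeight (κ : ℝ) {s : ℝ} (hs : s ∈ Ioo (0 : ℝ) 1) :
    HasDerivAt (whittakerWeight κ)
      (whittakerWeight κ s * (I / (2 * κ) * ((s : ℂ)⁻¹ + (1 - s : ℂ)⁻¹))) s := by
  have hs0 : s ≠ 0 := hs.1.ne'
  have hs1 : 1 - s ≠ 0 := sub_ne_zero.2 hs.2.ne'
  have hlog : HasDerivAt (fun s : ℝ => (Real.log s : ℂ) - (Real.log (1 - s) : ℂ))
      ((s : ℂ)⁻¹ + (1 - s : ℂ)⁻¹) s := by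
    refine ((Real.hasDerivAt_log hs0).ofReal_comp.sub ((Real.hasDerivAt_log hs1).comp s
      ((hasDerivAt_id' s).const_sub 1)).ofReal_comp).congr_deriv ?_
    push_cast
    ring
  exact (hlog.const_mul (I / (2 * κ))).cexp

theorem mul_one_sub_mul_deriv_whittakerWeight (κ : ℝ) {s : ℝ} (hs : s ∈ Ioo (0 : ℝ) 1) :
    s * (1 - s) * (whittakerWeight κ s * (I / (2 * κ) * ((s : ℂ)⁻¹ + (1 - s : ℂ)⁻¹)))
      = I / (2 * κ) * whittakerWeight κ s := by
  have hs0 : (s : ℂ) ≠ 0 := ofReal_ne_zero.2 hs.1.ne'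
  have hs1 : (1 - s : ℂ) ≠ 0 := by exact_mod_cast sub_ne_zero.2 hs.2.ne'
  field_simp
  ring

theorem tendsto_mul_whittakerWeight (κ : ℝ) {s₀ : ℝ} (hs₀ : s₀ * (1 - s₀) = 0) :
    Tendsto (fun s : ℝ => s * (1 - s) * whittakerWeight κ s) (𝓝 s₀) (𝓝 0) := by
  have hcont : Continuous fun s : ℝ => (s : ℂ) * (1 - s) := by fun_prop
  have h := (hcont.tendsto s₀).norm
  rw [show (s₀ : ℂ) * (1 - s₀) = 0 by exact_mod_cast hs₀, norm_zero] at h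
  rw [tendsto_zero_iff_norm_tendsto_zero]
  simpa only [norm_mul _ (whittakerWeight κ _), norm_whittakerWeight, mul_one] using h

theorem whittakerU_eq (κ : ℝ) : whittakerU κ = fun x : ℝ => x * cexp (-I * κ * x) *
    (2 * I * κ / (Gamma (1 - I / (2 * κ)) * Gamma (1 + I / (2 * κ)))
      * laplaceIoo (2 * I * κ) (whittakerWeight κ) x) := by
  funext x
  simp only [whittakerU, laplaceIoo, whittakerWeight]
  ring

/-- `u_κ` satisfies the dimensionless radial Coulomb equation
`u'' + (1/x + κ²) u = 0` for `x > 0`. -/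
theorem whittakerU_satisfies_coulomb (κ : ℝ) (hκ : κ ≠ 0) :
    ∀ x : ℝ, 0 < x →
      deriv (deriv (whittakerU κ)) x + (1 / (x : ℂ) + (κ : ℂ) ^ 2) * whittakerU κ x = 0 := by
  intro x hx
  rw [whittakerU_eq]
  set C := 2 * I * κ / (Gamma (1 - I / (2 * κ)) * Gamma (1 + I / (2 * κ)))
  set g := whittakerWeight κ
  have hg : IntegrableOn g (Ioo 0 1) := integrableOn_whittakerWeight κ
  have hkummer := laplaceIoo_kummer (a := 1 + I / (2 * κ)) (b := 2) (c := 2 * I * κ) hg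
    (fun s hs => hasDerivAt_whittakerWeight κ hs)
    (fun s hs => by rw [mul_one_sub_mul_deriv_whittakerWeight κ hs]; ring)
    ((tendsto_mul_whittakerWeight κ (by ring)).mono_left nhdsWithin_le_nhds)
    ((tendsto_mul_whittakerWeight κ (by ring)).mono_left nhdsWithin_le_nhds) x
  have hac : (1 + I / (2 * κ)) * (2 * I * κ) = 2 * I * κ - 1 := by
    have : (κ : ℂ) ≠ 0 := ofReal_ne_zero.2 hκ
    field_simp
    linear_combination I_sq
  refine coulomb_of_kummer hx.ne' (fun y => (hasDerivAt_laplaceIoo _ hg y).const_mul C)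
    ((hasDerivAt_laplaceIoo _ (integrableOn_Ioo_const_mul_ofReal_mul _ hg) x).const_mul C) ?_
  linear_combination C * hkummer + C * laplaceIoo (2 * I * κ) g x * hac
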